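/- Let K' > 0 and v : ℝ × [0,T] → ℝ satisfy |v(x,t)| ≤ K' max{1, e^{-K'x}}, and let h(x,t) = e^{M(T-t)}(e^{-f(t)x} + x) with f(t) = (e^{C(T-t)}-1)/C + K e^{C(T-t)} for K > K'. Then for every ε > 0 the set {(x,t) ∈ ℝ × [0,T] : ε h(x,t) < v(x,t)} is bounded. -/
import Mathlib
set_option maxHeartbeats 1000000


theorem stmt_8 (C T K K' M ε : ℝ) (hC : 0 < C) (hT : 0 < T) (hK' : 0 < K')
    (hKK' : K' < K) (hε : 0 < ε)
    (v : ℝ → ℝ → ℝ)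
    (hv : ∀ x t, |v x t| ≤ K' * max 1 (Real.exp (-K' * x)))
    (f : ℝ → ℝ) (h : ℝ → ℝ → ℝ)
    (hf : ∀ t, f t = (Real.exp (C * (T - t)) - 1) / C + K * Real.exp (C * (T - t)))
    (hh : ∀ x t, h x t = Real.exp (M * (T - t)) * (Real.exp (-(f t) * x) + x)) :
    Bornology.IsBounded
      {p : ℝ × ℝ | p.2 ∈ Set.Icc 0 T ∧ ε * h p.1 p.2 < v p.1 p.2} := by
  have hK : 0 < K := hK'.trans hKK'
  obtain ⟨c, hcpos, hcfac'⟩ :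
      ∃ c : ℝ, 0 < c ∧ ∀ t, 0 ≤ t → t ≤ T → c ≤ ε * Real.exp (M * (T - t)) := by
    refine ⟨ε * Real.exp (-(|M| * T)), mul_pos hε (Real.exp_pos _), fun t ht0 htT => ?_⟩
    apply mul_le_mul_of_nonneg_left _ hε.le
    apply Real.exp_le_exp.mpr
    have hTt0 : 0 ≤ T - t := by linarith
    have h1 : |M * (T - t)| ≤ |M| * T := by
      rw [abs_mul, abs_of_nonneg hTt0]
      have := abs_nonneg M
      nlinarith
    linarith [neg_abs_le (M * (T - t))]
  obtain ⟨R, hR1, hR2, hR3, hR0⟩ :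
      ∃ R : ℝ, 8 / K ^ 2 ≤ R - 1 ∧ 2 * K' / c / (K - K') ≤ R - 1 ∧ K' / c ≤ R - 1 ∧ 0 < R := by
    refine ⟨max (max (8 / K ^ 2) (2 * K' / c / (K - K'))) (K' / c) + 1, ?_, ?_, ?_, ?_⟩
    · have := (le_max_left (8 / K ^ 2) (2 * K' / c / (K - K'))).trans
        (le_max_left _ (K' / c))
      linarith
    · have := (le_max_right (8 / K ^ 2) (2 * K' / c / (K - K'))).trans
        (le_max_left _ (K' / c))
      linarith
    · have := le_max_right (max (8 / K ^ 2) (2 * K' / c / (K - K'))) (K' / c)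
      linarith
    · have h1 := le_max_right (max (8 / K ^ 2) (2 * K' / c / (K - K'))) (K' / c)
      have h2 : 0 < K' / c := div_pos hK' hcpos
      linarith
  refine Bornology.IsBounded.subset
    (((Metric.isBounded_Icc (-R) R).prod (Metric.isBounded_Icc 0 T))) ?_
  rintro ⟨x, t⟩ ⟨⟨ht0, htT⟩, hlt⟩
  simp only at ht0 htT hlt
  have hTt0 : 0 ≤ T - t := by linarith
  have hcfac : c ≤ ε * Real.exp (M * (T - t)) := hcfac' t ht0 htT
  have hvle : v x t ≤ K' * max 1 (Real.exp (-K' * x)) :=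
    (le_abs_self _).trans (hv x t)
  have hfK : K ≤ f t := by
    rw [hf]
    have h1 : (1:ℝ) ≤ Real.exp (C * (T - t)) := by
      rw [← Real.exp_zero]
      exact Real.exp_le_exp.mpr (by positivity)
    have h2 : 0 ≤ (Real.exp (C * (T - t)) - 1) / C := by
      apply div_nonneg _ hC.le; linarith
    nlinarith
  refine ⟨⟨?_, ?_⟩, ht0, htT⟩
  · -- -R ≤ x
    by_contra hx
    push_neg at hx
    simp only at hx
    have hxneg : x < 0 := by linarith
    have hx1 : 8 / K ^ 2 ≤ -x := by linarith
    have hx2 : 2 * K' / c / (K - K') ≤ -x := by linarith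
    -- exp(-Kx) ≥ K²x²/4
    have hquad : K ^ 2 * x ^ 2 / 4 ≤ Real.exp (-K * x) := by
      have h1 : Real.exp (-K * x) = Real.exp (-K * x / 2) ^ 2 := by
        rw [← Real.exp_nat_mul]; ring_nf
      have h2 : -K * x / 2 + 1 ≤ Real.exp (-K * x / 2) := Real.add_one_le_exp _
      have h3 : 0 ≤ -K * x / 2 := by nlinarith
      nlinarith [Real.exp_pos (-K * x / 2)]
    have h8 : 8 ≤ -x * K ^ 2 := (div_le_iff₀ (by positivity)).mp hx1
    have hA : -2 * x ≤ Real.exp (-K * x) := by nlinarith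
    have hhalf : Real.exp (-K * x) / 2 ≤ Real.exp (-K * x) + x := by linarith
    have hfexp : Real.exp (-K * x) ≤ Real.exp (-(f t) * x) := by
      apply Real.exp_le_exp.mpr
      nlinarith
    -- claim B : K' e^{-K'x} ≤ (c/2) e^{-Kx}
    have hB : K' * Real.exp (-K' * x) ≤ c / 2 * Real.exp (-K * x) := by
      have h1 : (K' - K) * x + 1 ≤ Real.exp ((K' - K) * x) := Real.add_one_le_exp _
      have h2 : 2 * K' / c ≤ -x * (K - K') := (div_le_iff₀ (by linarith)).mp hx2
      have h3 : 2 * K' / c ≤ Real.exp ((K' - K) * x) := by nlinarith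
      have h4 : K' ≤ c / 2 * Real.exp ((K' - K) * x) := by
        have h5 := mul_le_mul_of_nonneg_left h3 (by linarith : (0:ℝ) ≤ c / 2)
        have h6 : c / 2 * (2 * K' / c) = K' := by field_simp
        linarith
      have h5 : Real.exp ((K' - K) * x) * Real.exp (-K' * x) = Real.exp (-K * x) := by
        rw [← Real.exp_add]; ring_nf
      calc K' * Real.exp (-K' * x)
          ≤ (c / 2 * Real.exp ((K' - K) * x)) * Real.exp (-K' * x) :=
            mul_le_mul_of_nonneg_right h4 (Real.exp_pos _).le
        _ = c / 2 * Real.exp (-K * x) := by rw [mul_assoc, h5]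
    have hmax : max 1 (Real.exp (-K' * x)) = Real.exp (-K' * x) := by
      apply max_eq_right
      rw [← Real.exp_zero]
      exact Real.exp_le_exp.mpr (by nlinarith)
    have hpos2 : 0 ≤ Real.exp (-(f t) * x) + x := by
      have := Real.exp_pos (-K * x)
      linarith
    have hstep : Real.exp (-K * x) / 2 ≤ Real.exp (-(f t) * x) + x := by linarith
    have hstep2 : c / 2 * Real.exp (-K * x) ≤ c * (Real.exp (-(f t) * x) + x) := by
      have := mul_le_mul_of_nonneg_left hstep hcpos.le
      linarith [this]
    have hmain : K' * Real.exp (-K' * x) ≤ ε * h x t := by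
      rw [hh]
      calc K' * Real.exp (-K' * x) ≤ c / 2 * Real.exp (-K * x) := hB
        _ ≤ c * (Real.exp (-(f t) * x) + x) := hstep2
        _ ≤ (ε * Real.exp (M * (T - t))) * (Real.exp (-(f t) * x) + x) :=
            mul_le_mul_of_nonneg_right hcfac hpos2
        _ = ε * (Real.exp (M * (T - t)) * (Real.exp (-(f t) * x) + x)) := by ring
    rw [hmax] at hvle
    linarith
  · -- x ≤ R
    by_contra hx
    push_neg at hx
    simp only at hx
    have hx3 : K' / c ≤ x := by linarith
    have hxpos : 0 < x := lt_of_lt_of_le (div_pos hK' hcpos) hx3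
    have hmax : max 1 (Real.exp (-K' * x)) = 1 := by
      apply max_eq_left
      rw [← Real.exp_zero]
      exact Real.exp_le_exp.mpr (by nlinarith)
    have hK'cx : K' ≤ c * x := by
      rw [div_le_iff₀ hcpos] at hx3; linarith
    have hmain : K' ≤ ε * h x t := by
      rw [hh]
      have h1 : c * x ≤ c * (Real.exp (-(f t) * x) + x) := by
        have := mul_pos hcpos (Real.exp_pos (-(f t) * x))
        nlinarith [Real.exp_pos (-(f t) * x)]
      have h2 : 0 ≤ Real.exp (-(f t) * x) + x := by
        have := Real.exp_pos (-(f t) * x); linarith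
      calc K' ≤ c * x := hK'cx
        _ ≤ c * (Real.exp (-(f t) * x) + x) := h1
        _ ≤ (ε * Real.exp (M * (T - t))) * (Real.exp (-(f t) * x) + x) :=
            mul_le_mul_of_nonneg_right hcfac h2
        _ = ε * (Real.exp (M * (T - t)) * (Real.exp (-(f t) * x) + x)) := by ring
    rw [hmax, mul_one] at hvle
    linarith
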